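/- Fix an integer d ≥ 2 and let ρ(x, y) = arccos⟨x, y⟩ denote the geodesic distance on the unit sphere S^d ⊂ ℝ^{d+1}. Then there exist constants K ≥ K' > 0, depending only on d, such that for every n ∈ ℕ there exist 2^n points x_{n,1}, …, x_{n,2^n} ∈ S^d with the property that for every 2 ≤ k ≤ 2^n: min_{1 ≤ i ≤ k−1} ρ(x_{n,k}, x_{n,i}) = ρ(x_{n,k}, x_{n,k−1}) and K' 2^{−n} ≤ ρ(x_{n,k}, x_{n,k−1}) ≤ K 2^{−n}. -/

import Mathlib

/-!
Equally spaced points along a great circle already do it: with step `π / 2^n`, the points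
`x k = cos (k π / 2^n) e₀ + sin (k π / 2^n) e₁`, `k < 2^n`, stay within a half circle, so the
geodesic distance between `x k` and `x i` is exactly `(k - i) π / 2^n`. This is minimised over
`i < k` at `i = k - 1`, where it equals `π 2^{-n}`, so `K = K' = π` works.
-/

open Real
open scoped RealInnerProductSpace

noncomputable def geoDist {d : ℕ} (x y : EuclideanSpace ℝ (Fin (d+1))) : ℝ :=
  Real.arccos (inner ℝ x y)

section GreatCircle

variable {E : Type*} [NormedAddCommGroup E] [InnerProductSpace ℝ E]

noncomputable def greatCircle (u w : E) (t : ℝ) : E := cos t • u + sin t • w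

variable {u w : E} (hu : ‖u‖ = 1) (hw : ‖w‖ = 1) (huw : ⟪u, w⟫ = 0)
include hu hw huw

theorem inner_greatCircle (s t : ℝ) :
    ⟪greatCircle u w s, greatCircle u w t⟫ = cos (s - t) := by
  have hwu : ⟪w, u⟫ = 0 := by rw [real_inner_comm, huw]
  simp only [greatCircle, inner_add_left, inner_add_right, real_inner_smul_left,
    real_inner_smul_right, real_inner_self_eq_norm_sq, hu, hw, huw, hwu, cos_sub]
  ring

theorem norm_greatCircle (t : ℝ) : ‖greatCircle u w t‖ = 1 := by
  have h := inner_greatCircle hu hw huw t t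
  rw [sub_self, cos_zero, real_inner_self_eq_norm_sq] at h
  exact (pow_eq_one_iff_of_nonneg (norm_nonneg _) two_ne_zero).mp h

theorem arccos_inner_greatCircle_nat_mul {h : ℝ} (hh : 0 ≤ h) {i k : ℕ} (hik : i ≤ k)
    (hk : k * h ≤ π) :
    arccos ⟪greatCircle u w (k * h), greatCircle u w (i * h)⟫ = (k - i) * h := by
  have hik' : (i : ℝ) ≤ k := by exact_mod_cast hik
  rw [inner_greatCircle hu hw huw, ← sub_mul, arccos_cos]
  · exact mul_nonneg (sub_nonneg.mpr hik') hh
  · nlinarith [Nat.cast_nonneg (α := ℝ) i]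

end GreatCircle

theorem exists_orthonormal_pair_euclideanSpace {m : ℕ} (hm : 2 ≤ m) :
    ∃ u w : EuclideanSpace ℝ (Fin m), ‖u‖ = 1 ∧ ‖w‖ = 1 ∧ ⟪u, w⟫ = 0 := by
  let i₀ : Fin m := ⟨0, by omega⟩
  let i₁ : Fin m := ⟨1, by omega⟩
  have h01 : i₀ ≠ i₁ := by simp [i₀, i₁]
  exact ⟨EuclideanSpace.single i₀ 1, EuclideanSpace.single i₁ 1, by simp, by simp,
    by simp [EuclideanSpace.inner_single_left, h01.symm]⟩

/-- for each n there are 2^n approximately equally separated points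
x 0, …, x (2^n − 1) on S^d: for every index k with 1 ≤ k < 2^n, the minimum of
ρ(x k, x i) over i < k is attained at i = k − 1, and
K' 2^{−n} ≤ ρ(x k, x (k−1)) ≤ K 2^{−n}, with constants K ≥ K' > 0 depending only on d. -/
theorem stmt16 (d : ℕ) (hd : 2 ≤ d) :
    ∃ K K' : ℝ, 0 < K' ∧ K' ≤ K ∧
      ∀ n : ℕ, ∃ x : ℕ → EuclideanSpace ℝ (Fin (d+1)),
        (∀ i, i < 2^n → ‖x i‖ = 1) ∧
        ∀ k : ℕ, 1 ≤ k → k < 2^n →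
          (∀ i, i < k → geoDist (x k) (x (k-1)) ≤ geoDist (x k) (x i)) ∧
          K' * (1/2)^n ≤ geoDist (x k) (x (k-1)) ∧
          geoDist (x k) (x (k-1)) ≤ K * (1/2)^n := by
  obtain ⟨u, w, hu, hw, huw⟩ := exists_orthonormal_pair_euclideanSpace (m := d + 1) (by omega)
  refine ⟨π, π, pi_pos, le_rfl, fun n => ?_⟩
  set h : ℝ := π * (1/2)^n
  have hh : 0 < h := by positivity
  refine ⟨fun k => greatCircle u w (k * h), fun i _ => norm_greatCircle hu hw huw _,
    fun k hk1 hkn => ?_⟩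
  have hkπ : (k : ℝ) * h ≤ π := by
    have : (k : ℝ) ≤ 2^n := by exact_mod_cast hkn.le
    calc (k : ℝ) * h ≤ 2^n * h := by gcongr
      _ = π := by simp only [h, one_div, inv_pow]; field_simp
  have hdist : ∀ i, i < k → geoDist (greatCircle u w (k * h)) (greatCircle u w (i * h))
      = (k - i) * h := fun i hik =>
    arccos_inner_greatCircle_nat_mul hu hw huw hh.le hik.le hkπ
  have hstep : geoDist (greatCircle u w (k * h)) (greatCircle u w ((k - 1 : ℕ) * h)) = h := by
    rw [hdist _ (by omega), Nat.cast_sub hk1]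
    ring
  refine ⟨fun i hik => ?_, hstep.ge, hstep.le⟩
  rw [hstep, hdist i hik]
  have : (i : ℝ) + 1 ≤ k := by exact_mod_cast hik
  nlinarith
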